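/- Define the BBPSSW output fidelity map for Werner input states by g(F) = (F² + (1/9)(1 − F)²) / (F² + (2/3)F(1 − F) + (5/9)(1 − F)²). Then for every F with 1/2 < F < 1, one has F < g(F) < 1. -/
import Mathlib


/-- The BBPSSW output fidelity map for Werner input states:
`g(F) = (F² + (1/9)(1 - F)²) / (F² + (2/3)F(1 - F) + (5/9)(1 - F)²)`. -/
noncomputable def bbpsswFid (F : ℝ) : ℝ :=
  (F ^ 2 + (1 / 9) * (1 - F) ^ 2) /
    (F ^ 2 + (2 / 3) * F * (1 - F) + (5 / 9) * (1 - F) ^ 2)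

/-- One successful BBPSSW round on Werner states strictly improves the fidelity:
for every `F` with `1/2 < F < 1`, one has `F < g(F) < 1`. -/
theorem bbpsswFid_increasing (F : ℝ) (h1 : 1 / 2 < F) (h2 : F < 1) :
    F < bbpsswFid F ∧ bbpsswFid F < 1 := by
  have hd : 0 < F ^ 2 + (2 / 3) * F * (1 - F) + (5 / 9) * (1 - F) ^ 2 := by nlinarith
  unfold bbpsswFid
  constructor
  · rw [lt_div_iff₀ hd]; nlinarith [sq_nonneg (1 - F), sq_nonneg (2*F - 1)]
  · rw [div_lt_one hd]; nlinarith [sq_nonneg (1 - F)]
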